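/- arXiv:1902.10342 — 2 statements merged into one kernel-verified Lean document; each statement's English description precedes it below -/
import Mathlib

section
/- Let h be a Hamiltonian cycle of a graph on N vertices, oriented, with starting vertex k. For any two distinct vertices i, j both different from k, the sum of the positions of i and of j on h is at least 2·min(d(k,i), d(k,j)) + d(i,j), where d denotes graph distance. -/
namespace SimpleGraph.Walk

variable {V : Type*} {G : SimpleGraph V} {u v : V}

theorem dist_getVert_le_sub (p : G.Walk u v) {a b : ℕ} (hab : a ≤ b) :
    G.dist (p.getVert a) (p.getVert b) ≤ b - a := by
  have hend : (p.drop a).getVert (b - a) = p.getVert b := by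
    rw [drop_getVert, Nat.add_sub_cancel' hab]
  calc G.dist (p.getVert a) (p.getVert b)
      ≤ ((p.drop a).take (b - a)).length := hend ▸ dist_le _
    _ ≤ b - a := by rw [take_length]; exact min_le_left _ _

theorem dist_start_getVert_le (p : G.Walk u v) (a : ℕ) : G.dist u (p.getVert a) ≤ a := by
  simpa using p.dist_getVert_le_sub (Nat.zero_le a)

/-- Going back to the start from the earlier of the two positions costs at most that position
twice, and the segment between them accounts for the rest. -/
theorem two_mul_min_dist_add_dist_getVert_le (p : G.Walk u v) (a b : ℕ) :
    2 * min (G.dist u (p.getVert a)) (G.dist u (p.getVert b)) +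
      G.dist (p.getVert a) (p.getVert b) ≤ a + b := by
  wlog hab : a ≤ b generalizing a b
  · rw [min_comm, G.dist_comm (u := p.getVert a), add_comm a]
    exact this b a (le_of_not_ge hab)
  have hstart : min (G.dist u (p.getVert a)) (G.dist u (p.getVert b)) ≤ a :=
    (min_le_left _ _).trans (p.dist_start_getVert_le a)
  have hsegment := p.dist_getVert_le_sub hab
  omega

end SimpleGraph.Walk

theorem position_sum_ge_dist_bound_general
    {V : Type*}
    (G : SimpleGraph V) (k : V) (h : G.Walk k k)
    (i j : V)
    (ri rj : ℕ)
    (hi : h.getVert ri = i) (hj : h.getVert rj = j) :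
    2 * min (G.dist k i) (G.dist k j) + G.dist i j ≤ ri + rj := by
  subst hi hj
  exact h.two_mul_min_dist_add_dist_getVert_le ri rj

theorem position_sum_ge_dist_bound
    {V : Type*} [Fintype V] [DecidableEq V]
    (G : SimpleGraph V) (k : V) (h : G.Walk k k) (hh : h.IsHamiltonianCycle)
    (i j : V) (hik : i ≠ k) (hjk : j ≠ k) (hij : i ≠ j)
    (ri rj : ℕ) (hri : ri ≤ Fintype.card V - 1) (hrj : rj ≤ Fintype.card V - 1)
    (hi : h.getVert ri = i) (hj : h.getVert rj = j) :
    2 * min (G.dist k i) (G.dist k j) + G.dist i j ≤ ri + rj :=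
  position_sum_ge_dist_bound_general G k h i j ri rj hi hj
end

section
/- Let h be a Hamiltonian cycle on N vertices with starting vertex k, and let i be any vertex. If arc (i,a) is the r-th arc of h, then d(k,i) ≤ r ≤ N - d(a,k) - 1, where d is graph distance. -/
namespace SimpleGraph.Walk

variable {V : Type*} {G : SimpleGraph V} {u v : V}

lemma dist_getVert_le (p : G.Walk u v) (n : ℕ) : G.dist u (p.getVert n) ≤ n :=
  (dist_le (p.take n)).trans (by simp)

lemma dist_getVert_le_length_sub (p : G.Walk u v) (n : ℕ) :
    G.dist (p.getVert n) v ≤ p.length - n :=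
  (dist_le (p.drop n)).trans_eq (p.drop_length n)

end SimpleGraph.Walk

theorem arc_step_bounds_general
    {V : Type*} [Fintype V] [DecidableEq V]
    (G : SimpleGraph V)
    (k : V) (h : G.Walk k k) (hh : h.IsHamiltonianCycle)
    (i a : V) (r : ℕ) (hr : r < h.length)
    (hi : h.getVert r = i) (ha : h.getVert (r + 1) = a) :
    G.dist k i ≤ r ∧ r ≤ Fintype.card V - G.dist a k - 1 := by
  have hlen : h.length = Fintype.card V := hh.length_eq
  have hki : G.dist k i ≤ r := hi ▸ h.dist_getVert_le r
  have hak : G.dist a k ≤ h.length - (r + 1) := ha ▸ h.dist_getVert_le_length_sub (r + 1)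
  omega

theorem arc_step_bounds
    {V : Type*} [Fintype V] [DecidableEq V]
    (G : SimpleGraph V) (hconn : G.Connected)
    (k : V) (h : G.Walk k k) (hh : h.IsHamiltonianCycle)
    (i a : V) (r : ℕ) (hr : r < h.length)
    (hi : h.getVert r = i) (ha : h.getVert (r + 1) = a) :
    G.dist k i ≤ r ∧ r ≤ Fintype.card V - G.dist a k - 1 :=
  arc_step_bounds_general G k h hh i a r hr hi ha
end
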